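/- Generalized Vizing bound: Let G be a simple graph and let D_i(G) denote the number of vertices of G of degree exactly i. Then for every integer q with 1 ≤ q < n (where n = |V(G)|), ν(G) ≥ ( |E(G)| − Σ_{i ≥ q} i · D_i(G) ) / q. -/

import Mathlib

/-!
Edges with an endpoint of degree at least `q` number at most `∑_{deg v ≥ q} deg v`; the others
span the graph induced on the vertices of degree `< q`, and a graph `H` of maximum degree `d` has
at most `(d + 1) ν(H)` edges. Instead of Vizing's theorem, this last bound is proved by induction
on the vertex set. A vertex `u` with `ν(H - u) < ν(H)` is deleted at the cost of `deg u ≤ d`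
edges, and a disconnected `H` is split into two parts. Otherwise `H` is connected and every vertex
is missed by some maximum matching, so by Gallai's lemma a maximum matching misses at most one
vertex: then `|V(H)| ≤ 2ν + 1`, every degree is at most `min d (2ν)`, and
`2|E(H)| ≤ (2ν + 1) min d (2ν) ≤ 2(d + 1)ν`.
-/

/-- A finset of edges of `G` that are pairwise vertex-disjoint, i.e. a matching. -/
def IsMatchingFinset {V : Type*} (G : SimpleGraph V) (M : Finset (Sym2 V)) : Prop :=
  ↑M ⊆ G.edgeSet ∧ (M : Set (Sym2 V)).Pairwise fun e f => ∀ v, v ∈ e → v ∉ f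

open Finset

section

variable {V : Type*}

namespace IsMatchingFinset

variable {H H' : SimpleGraph V} {M N : Finset (Sym2 V)}

lemma empty : IsMatchingFinset H ∅ := by simp [IsMatchingFinset]

lemma subset (hM : IsMatchingFinset H M) (h : N ⊆ M) : IsMatchingFinset H N :=
  ⟨(coe_subset.mpr h).trans hM.1, hM.2.mono (coe_subset.mpr h)⟩

lemma mono (hM : IsMatchingFinset H M) (h : H ≤ H') : IsMatchingFinset H' M :=
  ⟨hM.1.trans (SimpleGraph.edgeSet_mono h), hM.2⟩

lemma eq_of_mem (hM : IsMatchingFinset H M) {e f : Sym2 V} (he : e ∈ M) (hf : f ∈ M) {v : V}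
    (hve : v ∈ e) (hvf : v ∈ f) : e = f := by
  by_contra hef
  exact hM.2 he hf hef v hve hvf

lemma adj (hM : IsMatchingFinset H M) {u v : V} (h : s(u, v) ∈ M) : H.Adj u v :=
  hM.1 h

end IsMatchingFinset

def IsMaximumMatchingFinset (H : SimpleGraph V) (M : Finset (Sym2 V)) : Prop :=
  IsMatchingFinset H M ∧ ∀ N, IsMatchingFinset H N → #N ≤ #M

lemma IsMaximumMatchingFinset.of_card_eq {H : SimpleGraph V} {M N : Finset (Sym2 V)}
    (hM : IsMaximumMatchingFinset H M) (hN : IsMatchingFinset H N) (h : #N = #M) :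
    IsMaximumMatchingFinset H N :=
  ⟨hN, fun N' hN' => h ▸ hM.2 N' hN'⟩

namespace SimpleGraph

/-- `G[s]`, kept on the whole vertex type: vertices outside `s` are isolated. -/
def inducedOn (G : SimpleGraph V) (s : Finset V) : SimpleGraph V where
  Adj a b := G.Adj a b ∧ a ∈ s ∧ b ∈ s
  symm := ⟨fun _ _ h => ⟨h.1.symm, h.2.2, h.2.1⟩⟩
  loopless := ⟨fun a h => G.loopless.irrefl a h.1⟩

variable {G : SimpleGraph V} {s t : Finset V}

@[simp]
lemma inducedOn_adj {a b : V} : (G.inducedOn s).Adj a b ↔ G.Adj a b ∧ a ∈ s ∧ b ∈ s :=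
  Iff.rfl

lemma inducedOn_le : G.inducedOn s ≤ G := fun _ _ h => h.1

lemma inducedOn_mono (h : s ⊆ t) : G.inducedOn s ≤ G.inducedOn t :=
  fun _ _ hab => ⟨hab.1, h hab.2.1, h hab.2.2⟩

noncomputable def matchingNumber (H : SimpleGraph V) : ℕ :=
  sSup {n | ∃ M, IsMatchingFinset H M ∧ #M = n}

variable {H H' : SimpleGraph V}

lemma _root_.IsMaximumMatchingFinset.card_eq_matchingNumber {M : Finset (Sym2 V)}
    (hM : IsMaximumMatchingFinset H M) : #M = H.matchingNumber :=
  le_antisymm (le_csSup ⟨#M, fun _ ⟨N, hN, hn⟩ => hn ▸ hM.2 N hN⟩ ⟨M, hM.1, rfl⟩)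
    (csSup_le ⟨_, M, hM.1, rfl⟩ fun _ ⟨N, hN, hn⟩ => hn ▸ hM.2 N hN)

variable [Fintype V]

lemma exists_isMaximumMatchingFinset (H : SimpleGraph V) :
    ∃ M, IsMaximumMatchingFinset H M := by
  have hne : {n | ∃ M, IsMatchingFinset H M ∧ #M = n}.Nonempty :=
    ⟨0, ∅, IsMatchingFinset.empty, rfl⟩
  have hbdd : BddAbove {n | ∃ M, IsMatchingFinset H M ∧ #M = n} :=
    ⟨Fintype.card (Sym2 V), fun n ⟨M, _, hn⟩ => hn ▸ card_le_univ M⟩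
  obtain ⟨M, hM, hcard⟩ := Nat.sSup_mem hne hbdd
  exact ⟨M, hM, fun N hN => hcard ▸ le_csSup hbdd ⟨N, hN, rfl⟩⟩

lemma _root_.IsMatchingFinset.card_le_matchingNumber {M : Finset (Sym2 V)}
    (hM : IsMatchingFinset H M) : #M ≤ H.matchingNumber := by
  obtain ⟨M₀, hM₀⟩ := H.exists_isMaximumMatchingFinset
  exact hM₀.card_eq_matchingNumber ▸ hM₀.2 M hM

lemma matchingNumber_mono (h : H ≤ H') : H.matchingNumber ≤ H'.matchingNumber := by
  obtain ⟨M, hM⟩ := H.exists_isMaximumMatchingFinset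
  exact hM.card_eq_matchingNumber ▸ (hM.1.mono h).card_le_matchingNumber

end SimpleGraph

variable [DecidableEq V]

instance {G : SimpleGraph V} [DecidableRel G.Adj] {s : Finset V} :
    DecidableRel (G.inducedOn s).Adj :=
  fun a b => inferInstanceAs (Decidable (G.Adj a b ∧ a ∈ s ∧ b ∈ s))

def coveredVerts (M : Finset (Sym2 V)) : Finset V := M.biUnion Sym2.toFinset

lemma mem_coveredVerts {M : Finset (Sym2 V)} {v : V} :
    v ∈ coveredVerts M ↔ ∃ e ∈ M, v ∈ e := by
  simp [coveredVerts, Sym2.mem_toFinset]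

lemma coveredVerts_insert (e : Sym2 V) (M : Finset (Sym2 V)) :
    coveredVerts (insert e M) = e.toFinset ∪ coveredVerts M :=
  biUnion_insert

lemma card_coveredVerts_le (M : Finset (Sym2 V)) : #(coveredVerts M) ≤ 2 * #M :=
  (card_biUnion_le_card_mul M _ 2 fun e _ => by
    rw [Sym2.card_toFinset]
    split_ifs <;> omega).trans_eq (mul_comm _ _)

namespace IsMatchingFinset

variable {H : SimpleGraph V} {M : Finset (Sym2 V)}

lemma insert_of_forall_notMem (hM : IsMatchingFinset H M) {e : Sym2 V} (he : e ∈ H.edgeSet)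
    (hfree : ∀ v ∈ e, v ∉ coveredVerts M) : IsMatchingFinset H (insert e M) := by
  refine ⟨?_, ?_⟩
  · rw [coe_insert]
    exact Set.insert_subset he hM.1
  · rw [coe_insert]
    refine hM.2.insert fun f hf _ => ⟨fun v hve hvf => ?_, fun v hvf hve => ?_⟩ <;>
      exact hfree v hve (mem_coveredVerts.mpr ⟨f, hf, hvf⟩)

lemma coveredVerts_erase (hM : IsMatchingFinset H M) {f : Sym2 V} (hf : f ∈ M) :
    coveredVerts (M.erase f) = coveredVerts M \ f.toFinset := by
  ext v
  simp only [mem_coveredVerts, mem_sdiff, mem_erase, Sym2.mem_toFinset]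
  constructor
  · rintro ⟨e, ⟨hef, heM⟩, hve⟩
    exact ⟨⟨e, heM, hve⟩, fun hvf => hef (hM.eq_of_mem heM hf hve hvf)⟩
  · rintro ⟨⟨e, heM, hve⟩, hvf⟩
    exact ⟨e, ⟨fun h => hvf (h ▸ hve), heM⟩, hve⟩

lemma swap (hM : IsMatchingFinset H M) {u x y : V} (hf : s(x, y) ∈ M) (hux : H.Adj u x)
    (hu : u ∉ coveredVerts M) :
    IsMatchingFinset H (insert s(u, x) (M.erase s(x, y))) ∧
      #(insert s(u, x) (M.erase s(x, y))) = #M ∧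
      coveredVerts (insert s(u, x) (M.erase s(x, y))) = insert u ((coveredVerts M).erase y) := by
  have hxy : x ≠ y := (hM.adj hf).ne
  have hx : x ∈ coveredVerts M := mem_coveredVerts.mpr ⟨_, hf, Sym2.mem_mk_left x y⟩
  have hcov : coveredVerts (M.erase s(x, y)) = ((coveredVerts M).erase x).erase y := by
    rw [hM.coveredVerts_erase hf, Sym2.toFinset_mk_eq]
    ext v
    simp only [mem_sdiff, mem_insert, mem_singleton, mem_erase]
    tauto
  have hnew : s(u, x) ∉ M.erase s(x, y) := fun h =>
    hu (mem_coveredVerts.mpr ⟨_, mem_of_mem_erase h, Sym2.mem_mk_left u x⟩)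
  refine ⟨(hM.subset (erase_subset _ _)).insert_of_forall_notMem hux fun v hv => ?_, ?_, ?_⟩
  · rw [hcov]
    rcases Sym2.mem_iff.mp hv with rfl | rfl
    · exact fun h => hu (mem_of_mem_erase (mem_of_mem_erase h))
    · simp
  · rw [card_insert_of_notMem hnew, card_erase_of_mem hf]
    have := card_pos.mpr ⟨_, hf⟩
    omega
  · rw [coveredVerts_insert, hcov, Sym2.toFinset_mk_eq]
    ext v
    simp only [mem_union, mem_insert, mem_singleton, mem_erase]
    grind

lemma mem_of_subset_union (hM : IsMatchingFinset H M) {M₀ N : Finset (Sym2 V)}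
    (hN : N ⊆ M₀ ∪ M) {e : Sym2 V} (he : e ∈ M) {u : V} (hue : u ∈ e)
    (huM₀ : u ∉ coveredVerts M₀) (huN : u ∈ coveredVerts N) : e ∈ N := by
  obtain ⟨g, hgN, hug⟩ := mem_coveredVerts.mp huN
  rcases mem_union.mp (hN hgN) with hgM₀ | hgM
  · exact absurd (mem_coveredVerts.mpr ⟨g, hgM₀, hug⟩) huM₀
  · exact hM.eq_of_mem he hgM hue hug ▸ hgN

lemma coveredVerts_subset {G : SimpleGraph V} {s : Finset V}
    (hM : IsMatchingFinset (G.inducedOn s) M) : coveredVerts M ⊆ s := by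
  intro v hv
  obtain ⟨e, he, hve⟩ := mem_coveredVerts.mp hv
  obtain ⟨w, rfl⟩ := Sym2.mem_iff_exists.mp hve
  exact (SimpleGraph.inducedOn_adj.mp (hM.adj he)).2.1

end IsMatchingFinset

namespace IsMaximumMatchingFinset

variable {H : SimpleGraph V} {M : Finset (Sym2 V)}

lemma mem_or_mem_of_adj (hM : IsMaximumMatchingFinset H M) {a b : V} (hab : H.Adj a b) :
    a ∈ coveredVerts M ∨ b ∈ coveredVerts M := by
  by_contra! h
  have hab' : s(a, b) ∉ M := fun hab' =>
    h.1 (mem_coveredVerts.mpr ⟨_, hab', Sym2.mem_mk_left a b⟩)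
  have := hM.2 _ (hM.1.insert_of_forall_notMem hab fun v hv => by
    rcases Sym2.mem_iff.mp hv with rfl | rfl
    exacts [h.1, h.2])
  rw [card_insert_of_notMem hab'] at this
  omega

lemma exists_mem_of_mem_of_notMem (hM : IsMaximumMatchingFinset H M) {N : Finset (Sym2 V)}
    (hN : IsMatchingFinset H N) {u x : V} (heN : s(u, x) ∈ N) (huM : u ∉ coveredVerts M) :
    ∃ y, s(x, y) ∈ M ∧ s(x, y) ∉ N ∧ y ≠ u := by
  have hux : H.Adj u x := hN.adj heN
  obtain ⟨f, hfM, hxf⟩ := mem_coveredVerts.mp ((hM.mem_or_mem_of_adj hux).resolve_left huM)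
  obtain ⟨y, rfl⟩ := Sym2.mem_iff_exists.mp hxf
  have hyu : y ≠ u := fun h =>
    huM (mem_coveredVerts.mpr ⟨_, hfM, h ▸ Sym2.mem_mk_right x y⟩)
  refine ⟨y, hfM, fun hfN => ?_, hyu⟩
  rcases Sym2.eq_iff.mp (hN.eq_of_mem heN hfN (Sym2.mem_mk_right u x) (Sym2.mem_mk_left x y))
    with ⟨hux', -⟩ | ⟨huy, -⟩
  exacts [hux.ne hux', hyu huy.symm]

/-- Alternating-path exchange: the component of `u` in `M ∆ N` is an alternating path from `u`
to some `y`, and switching `M` and `N` along it gives `M'` and `N'`. -/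
theorem exists_exchange (hM : IsMaximumMatchingFinset H M) {N : Finset (Sym2 V)}
    (hN : IsMatchingFinset H N) {u : V} (huN : u ∈ coveredVerts N) (huM : u ∉ coveredVerts M) :
    ∃ y ∈ coveredVerts M, y ∉ coveredVerts N ∧
      (∃ M', IsMaximumMatchingFinset H M' ∧
        coveredVerts M' = insert u ((coveredVerts M).erase y)) ∧
      ∃ N', IsMatchingFinset H N' ∧ #N' = #N ∧ N' ⊆ M ∪ N ∧
        coveredVerts N' = insert y ((coveredVerts N).erase u) := by
  induction hk : #(N \ M) using Nat.strong_induction_on generalizing M u with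
  | _ k ih =>
  obtain ⟨e, heN, hue⟩ := mem_coveredVerts.mp huN
  obtain ⟨x, rfl⟩ := Sym2.mem_iff_exists.mp hue
  obtain ⟨y, hfM, hfN, hyu⟩ := hM.exists_mem_of_mem_of_notMem hN heN huM
  have hyM : y ∈ coveredVerts M := mem_coveredVerts.mpr ⟨_, hfM, Sym2.mem_mk_right x y⟩
  have hf_swap : s(y, x) ∈ M := Sym2.eq_swap ▸ hfM
  obtain ⟨hM₁, hM₁card, hM₁cov⟩ := hM.1.swap hfM (hN.adj heN) huM
  set M₁ := insert s(u, x) (M.erase s(x, y))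
  have hM₁sub : M₁ ∪ N ⊆ M ∪ N := by
    intro g hg
    simp only [M₁, mem_union, mem_insert, mem_erase] at hg ⊢
    rcases hg with (rfl | ⟨-, hg⟩) | hg <;> tauto
  -- The path starts `u, x, y`; it ends at `y` unless `N` matches `y`, and otherwise it continues
  -- as the path of `M₁ ∆ N` from `y`.
  by_cases hyN : y ∉ coveredVerts N
  · obtain ⟨hN', hN'card, hN'cov⟩ :=
      hN.swap (Sym2.eq_swap ▸ heN) (hM.1.adj hf_swap) hyN
    refine ⟨y, hyM, hyN, ⟨M₁, hM.of_card_eq hM₁ hM₁card, hM₁cov⟩, _, hN', hN'card,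
      insert_subset (mem_union_left _ hf_swap) ((erase_subset _ _).trans subset_union_right),
      hN'cov⟩
  rw [not_not] at hyN
  have hk' : #(N \ M₁) < k := by
    rw [← hk]
    refine card_lt_card ⟨fun g hg => ?_, fun h => ?_⟩
    · simp only [M₁, mem_sdiff, mem_insert, mem_erase, not_or, not_and] at hg ⊢
      exact ⟨hg.1, fun hgM => hg.2.2 (fun hgf => hfN (hgf ▸ hg.1)) hgM⟩
    · exact (mem_sdiff.mp (h (mem_sdiff.mpr ⟨heN, fun he => huM
        (mem_coveredVerts.mpr ⟨_, he, Sym2.mem_mk_left u x⟩)⟩))).2 (mem_insert_self _ _)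
  obtain ⟨z, hzM₁, hzN, ⟨M', hM', hM'cov⟩, N'', hN'', hN''card, hN''sub, hN''cov⟩ :=
    ih _ hk' (hM.of_card_eq hM₁ hM₁card) hyN (by simp [hM₁cov, hyu]) rfl
  have hzu : z ≠ u := fun h => hzN (h ▸ huN)
  have heN'' : s(x, u) ∈ N'' := Sym2.eq_swap ▸ hN.mem_of_subset_union (hM₁sub.trans' hN''sub)
    heN (Sym2.mem_mk_left u x) huM (by simp [hN''cov, huN, hyu.symm])
  have hyz : y ≠ z := fun h => hzN (h ▸ hyN)
  obtain ⟨hN', hN'card, hN'cov⟩ := hN''.swap heN'' (hM.1.adj hf_swap) (by simp [hN''cov, hyz])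
  refine ⟨z, ?_, hzN, ⟨M', hM', ?_⟩, _, hN', hN'card.trans hN''card, insert_subset
    (mem_union_left _ hf_swap) ((erase_subset _ _).trans (hM₁sub.trans' hN''sub)), ?_⟩
  · rw [hM₁cov] at hzM₁
    exact mem_of_mem_erase ((mem_insert.mp hzM₁).resolve_left hzu)
  · rw [hM'cov, hM₁cov]
    ext v
    simp only [mem_insert, mem_erase]
    grind
  · rw [hN'cov, hN''cov]
    ext v
    simp only [mem_insert, mem_erase]
    grind

/-- Gallai's lemma. If the second vertex `z` of the walk is matched, exchange `M` along the
alternating path from `u` with a maximum matching missing `z`: either the path ends at `z` and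
the walk from `z` is shorter, or the exchanged matching misses the adjacent `u` and `z`. -/
theorem eq_of_walk (hH : ∀ v, ∃ N, IsMaximumMatchingFinset H N ∧ v ∉ coveredVerts N)
    {u w : V} (p : H.Walk u w) (hM : IsMaximumMatchingFinset H M)
    (hu : u ∉ coveredVerts M) (hw : w ∉ coveredVerts M) : u = w := by
  induction p generalizing M with
  | nil => rfl
  | @cons u z w huz q ih =>
  by_contra huw
  by_cases hz : z ∉ coveredVerts M
  · obtain rfl := ih hM hz hw
    exact (hM.mem_or_mem_of_adj huz).elim hu hz
  rw [not_not] at hz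
  obtain ⟨N, hN, hzN⟩ := hH z
  have huN : u ∈ coveredVerts N := (hN.mem_or_mem_of_adj huz).resolve_right hzN
  obtain ⟨y, hyM, hyN, ⟨M', hM', hM'cov⟩, N', hN', hN'card, -, hN'cov⟩ :=
    hM.exists_exchange hN.1 huN hu
  by_cases hyz : y = z
  · subst hyz
    have := ih hM' (by simp [hM'cov, huz.ne.symm]) (by simp [hM'cov, hw, Ne.symm huw])
    exact hw (this ▸ hz)
  · have hN'max := hN.of_card_eq hN' hN'card
    have hyu : y ≠ u := fun h => hu (h ▸ hyM)
    rcases hN'max.mem_or_mem_of_adj huz with h | h <;> rw [hN'cov, mem_insert, mem_erase] at h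
    · exact h.elim (fun h => hyu h.symm) (fun h => h.1 rfl)
    · exact h.elim (fun h => hyz h.symm) (fun h => hzN h.2)

lemma card_le_two_mul_card_add_one
    (hH : ∀ v, ∃ N, IsMaximumMatchingFinset H N ∧ v ∉ coveredVerts N) {s : Finset V}
    (hs : ∀ u ∈ s, ∀ w ∈ s, H.Reachable u w)
    (hM : IsMaximumMatchingFinset H M) : #s ≤ 2 * #M + 1 := by
  have hfree : #(s \ coveredVerts M) ≤ 1 := card_le_one.mpr fun u hu w hw =>
    (hs u (mem_sdiff.mp hu).1 w (mem_sdiff.mp hw).1).elim fun p =>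
      hM.eq_of_walk hH p (mem_sdiff.mp hu).2 (mem_sdiff.mp hw).2
  have := card_le_card_sdiff_add_card (s := s) (t := coveredVerts M)
  have := card_coveredVerts_le M
  omega

end IsMaximumMatchingFinset

namespace SimpleGraph

variable [Fintype V] {G : SimpleGraph V} {s t : Finset V}

lemma matchingNumber_inducedOn_add_le (h : Disjoint s t) :
    (G.inducedOn s).matchingNumber + (G.inducedOn t).matchingNumber ≤
      (G.inducedOn (s ∪ t)).matchingNumber := by
  obtain ⟨M, hM⟩ := (G.inducedOn s).exists_isMaximumMatchingFinset
  obtain ⟨N, hN⟩ := (G.inducedOn t).exists_isMaximumMatchingFinset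
  have hdisj : ∀ e ∈ M, ∀ f ∈ N, ∀ v ∈ e, v ∉ f := fun e he f hf v hve hvf =>
    Finset.disjoint_left.mp h (hM.1.coveredVerts_subset (mem_coveredVerts.mpr ⟨e, he, hve⟩))
      (hN.1.coveredVerts_subset (mem_coveredVerts.mpr ⟨f, hf, hvf⟩))
  have hMN : IsMatchingFinset (G.inducedOn (s ∪ t)) (M ∪ N) := by
    refine ⟨?_, ?_⟩
    · rw [coe_union]
      exact Set.union_subset (hM.1.mono (inducedOn_mono subset_union_left)).1
        (hN.1.mono (inducedOn_mono subset_union_right)).1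
    · rw [coe_union]
      exact Set.pairwise_union.mpr ⟨hM.1.2, hN.1.2, fun e he f hf _ =>
        ⟨hdisj e he f hf, fun v hvf hve => hdisj e he f hf v hve hvf⟩⟩
  have hMN' : Disjoint M N := Finset.disjoint_left.mpr fun e he heN =>
    hdisj e he e heN _ (Sym2.out_fst_mem e) (Sym2.out_fst_mem e)
  rw [← hM.card_eq_matchingNumber, ← hN.card_eq_matchingNumber, ← card_union_of_disjoint hMN']
  exact hMN.card_le_matchingNumber

variable [DecidableRel G.Adj] {d : ℕ}

lemma card_edgeFinset_le_sum_degree_add {H : SimpleGraph V} [DecidableRel H.Adj] (t : Finset V)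
    (h : ∀ a b, G.Adj a b → ¬H.Adj a b → a ∈ t ∨ b ∈ t) :
    #G.edgeFinset ≤ ∑ v ∈ t, G.degree v + #H.edgeFinset := by
  have hsub : G.edgeFinset ⊆ t.biUnion (fun v => G.incidenceFinset v) ∪ H.edgeFinset := by
    intro e he
    induction e using Sym2.ind with | _ a b =>
    rw [mem_edgeFinset, mem_edgeSet] at he
    by_cases hH : H.Adj a b
    · exact mem_union_right _ (mem_edgeFinset.mpr hH)
    refine mem_union_left _ (mem_biUnion.mpr ?_)
    rcases h a b he hH with ha | hb
    · exact ⟨a, ha, (mem_incidenceFinset _ _ _).mpr ⟨he, Sym2.mem_mk_left a b⟩⟩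
    · exact ⟨b, hb, (mem_incidenceFinset _ _ _).mpr ⟨he, Sym2.mem_mk_right a b⟩⟩
  calc #G.edgeFinset ≤ #(t.biUnion (fun v => G.incidenceFinset v)) + #H.edgeFinset :=
        (card_le_card hsub).trans (card_union_le _ _)
    _ ≤ ∑ v ∈ t, G.degree v + #H.edgeFinset := by
        gcongr
        exact card_biUnion_le.trans_eq (sum_congr rfl fun v _ => card_incidenceFinset_eq_degree _ _)

lemma card_edgeFinset_inducedOn_le_add {C : Finset V}
    (hC : ∀ a ∈ C, ∀ b ∈ s, G.Adj a b → b ∈ C) :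
    #(G.inducedOn s).edgeFinset ≤
      #(G.inducedOn C).edgeFinset + #(G.inducedOn (s \ C)).edgeFinset := by
  refine (card_le_card fun e he => ?_).trans (card_union_le _ _)
  induction e using Sym2.ind with | _ a b =>
  simp only [mem_union, mem_edgeFinset, mem_edgeSet, inducedOn_adj, mem_sdiff] at he ⊢
  obtain ⟨hab, ha, hb⟩ := he
  by_cases haC : a ∈ C
  · exact Or.inl ⟨hab, haC, hC a haC b hb hab⟩
  · exact Or.inr ⟨hab, ⟨ha, haC⟩, hb, fun hbC => haC (hC b hbC a ha hab.symm)⟩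

lemma card_edgeFinset_inducedOn_le_of_card_le {k : ℕ}
    (hd : ∀ v ∈ s, (G.inducedOn s).degree v ≤ d) (hs : #s ≤ 2 * k + 1) :
    #(G.inducedOn s).edgeFinset ≤ (d + 1) * k := by
  set m := min d (#s - 1)
  have hdeg (v : V) (hv : v ∈ s) : (G.inducedOn s).degree v ≤ m := by
    refine le_min (hd v hv) ?_
    rw [← card_neighborFinset_eq_degree, ← card_erase_of_mem hv]
    exact card_le_card fun w hw => by
      simp only [mem_neighborFinset, inducedOn_adj] at hw
      exact mem_erase.mpr ⟨hw.1.ne', hw.2.2⟩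
  have hzero (v : V) (hv : v ∉ s) : (G.inducedOn s).degree v = 0 := by
    rw [← card_neighborFinset_eq_degree, card_eq_zero]
    ext w
    simp [hv]
  have hsum : 2 * #(G.inducedOn s).edgeFinset ≤ #s * m := by
    rw [← sum_degrees_eq_twice_card_edges,
      ← sum_subset (subset_univ s) fun v _ hv => hzero v hv, ← smul_eq_mul]
    exact sum_le_card_nsmul _ _ _ hdeg
  have hmk : m ≤ 2 * k := (min_le_right _ _).trans (by omega)
  have hmd : m ≤ d := min_le_left _ _
  nlinarith [Nat.mul_le_mul_right m hs, Nat.mul_le_mul_left k hmd]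

theorem card_edgeFinset_inducedOn_le_mul_matchingNumber
    (hd : ∀ v ∈ s, (G.inducedOn s).degree v ≤ d) :
    #(G.inducedOn s).edgeFinset ≤ (d + 1) * (G.inducedOn s).matchingNumber := by
  induction s using Finset.strongInduction with | H s ih =>
  have ih_of_ssubset (t : Finset V) (ht : t ⊂ s) :
      #(G.inducedOn t).edgeFinset ≤ (d + 1) * (G.inducedOn t).matchingNumber :=
    ih t ht fun v hv => (degree_le_of_le (inducedOn_mono ht.1)).trans (hd v (ht.1 hv))
  by_cases hess :
      ∃ u ∈ s, (G.inducedOn (s.erase u)).matchingNumber < (G.inducedOn s).matchingNumber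
  · obtain ⟨u, hu, hlt⟩ := hess
    have hdel := card_edgeFinset_le_sum_degree_add (G := G.inducedOn s)
      (H := G.inducedOn (s.erase u)) {u} fun a b hab hab' => by
        simp only [inducedOn_adj, mem_erase, mem_singleton] at *
        tauto
    rw [sum_singleton] at hdel
    have := ih_of_ssubset _ (erase_ssubset hu)
    have := hd u hu
    nlinarith
  push Not at hess
  by_cases hconn : ∀ u ∈ s, ∀ w ∈ s, (G.inducedOn s).Reachable u w
  · obtain ⟨M, hM⟩ := (G.inducedOn s).exists_isMaximumMatchingFinset
    have hfree (v : V) :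
        ∃ N, IsMaximumMatchingFinset (G.inducedOn s) N ∧ v ∉ coveredVerts N := by
      by_cases hv : v ∈ s
      · obtain ⟨N, hN⟩ := (G.inducedOn (s.erase v)).exists_isMaximumMatchingFinset
        refine ⟨N, hM.of_card_eq (hN.1.mono (inducedOn_mono (erase_subset v s))) ?_,
          fun h => by simpa using hN.1.coveredVerts_subset h⟩
        rw [hN.card_eq_matchingNumber, hM.card_eq_matchingNumber]
        exact le_antisymm (matchingNumber_mono (inducedOn_mono (erase_subset v s))) (hess v hv)
      · exact ⟨M, hM, fun h => hv (hM.1.coveredVerts_subset h)⟩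
    rw [← hM.card_eq_matchingNumber]
    exact card_edgeFinset_inducedOn_le_of_card_le hd (hM.card_le_two_mul_card_add_one hfree hconn)
  push Not at hconn
  obtain ⟨u, hu, w, hw, huw⟩ := hconn
  set C := {v ∈ s | (G.inducedOn s).Reachable u v}
  have hCs : C ⊆ s := filter_subset _ s
  have hsC : C ∪ (s \ C) = s := union_sdiff_of_subset hCs
  calc #(G.inducedOn s).edgeFinset
      ≤ #(G.inducedOn C).edgeFinset + #(G.inducedOn (s \ C)).edgeFinset :=
        card_edgeFinset_inducedOn_le_add fun a ha b hb hab =>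
          mem_filter.mpr ⟨hb, (mem_filter.mp ha).2.trans (Adj.reachable ⟨hab, hCs ha, hb⟩)⟩
    _ ≤ (d + 1) * (G.inducedOn C).matchingNumber +
          (d + 1) * (G.inducedOn (s \ C)).matchingNumber :=
        add_le_add (ih_of_ssubset C ⟨hCs, fun h => huw (mem_filter.mp (h hw)).2⟩)
          (ih_of_ssubset _ (sdiff_ssubset hCs ⟨u, by simp [C, hu]⟩))
    _ ≤ (d + 1) * (G.inducedOn s).matchingNumber := by
        rw [← mul_add]
        gcongr
        simpa [hsC] using
          matchingNumber_inducedOn_add_le (G := G) (disjoint_sdiff (s := C) (t := s))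

end SimpleGraph

end

open SimpleGraph in
/-- Generalized Vizing bound: for every `1 ≤ q < n`,
`ν(G) ≥ (|E(G)| − Σ_{i ≥ q} i·D_i(G)) / q`, where
`Σ_{i ≥ q} i·D_i(G) = Σ_{v : deg v ≥ q} deg v`. -/
theorem generalized_vizing_bound
    {V : Type*} [Fintype V] [DecidableEq V] (G : SimpleGraph V) [DecidableRel G.Adj] :
    ∃ M : Finset (Sym2 V), IsMatchingFinset G M ∧
      ∀ q : ℕ, 1 ≤ q → q < Fintype.card V →
        ((G.edgeFinset.card : ℝ) -
            ∑ v ∈ Finset.univ.filter fun v => q ≤ G.degree v, (G.degree v : ℝ)) / q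
          ≤ (M.card : ℝ) := by
  obtain ⟨M, hM⟩ := G.exists_isMaximumMatchingFinset
  refine ⟨M, hM.1, fun q hq _ => ?_⟩
  set low : Finset V := {v | G.degree v < q}
  have hhigh : #G.edgeFinset ≤
      ∑ v ∈ {v | q ≤ G.degree v}, G.degree v + #(G.inducedOn low).edgeFinset :=
    card_edgeFinset_le_sum_degree_add _ fun a b hab hlow => by
      simp only [inducedOn_adj, low, mem_filter, mem_univ, true_and, not_and_or, not_lt] at hlow ⊢
      tauto
  have hlow : #(G.inducedOn low).edgeFinset ≤ q * #M := by
    have hdeg (v : V) (hv : v ∈ low) : (G.inducedOn low).degree v ≤ q - 1 :=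
      (degree_le_of_le inducedOn_le).trans (by simp only [low, mem_filter] at hv; omega)
    calc #(G.inducedOn low).edgeFinset ≤ (q - 1 + 1) * (G.inducedOn low).matchingNumber :=
          card_edgeFinset_inducedOn_le_mul_matchingNumber hdeg
      _ ≤ q * #M := by
          rw [Nat.sub_add_cancel hq, hM.card_eq_matchingNumber]
          exact Nat.mul_le_mul_left q (matchingNumber_mono inducedOn_le)
  rw [div_le_iff₀ (by exact_mod_cast hq), sub_le_iff_le_add, mul_comm]
  exact_mod_cast (hhigh.trans (Nat.add_le_add_left hlow _)).trans_eq (Nat.add_comm _ _)
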